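/- For nonnegative integers z_1, ..., z_d with h = z_1 + ··· + z_d and real x with x > 2d, the following integral identity holds: ∫_0^∞ e^{-xt} ∏_{j=1}^d I_{z_j}(2t) dt = x^{-(h+1)} ∑_{n≥0} A(n) · ((h/2+1/2)_n (h/2+1)_n / (h+1)_n) · (4/x²)^n / n!, where A(n) = ∑_{n_1+···+n_d = n} C(n; n_1,...,n_d) · C(n+h; n_1+z_1,...,n_d+z_d) is a sum of products of multinomial coefficients. -/

import Mathlib

open MeasureTheory

/-- The modified Bessel function of the first kind of nonnegative integer order `z`. -/
noncomputable def besselI (z : ℕ) (t : ℝ) : ℝ :=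
  ∑' n : ℕ, (t / 2) ^ (2 * n + z) / (n.factorial * (n + z).factorial)

/-- The Pochhammer symbol `(a)_n = a(a+1)⋯(a+n-1)`. -/
noncomputable def poch (a : ℝ) (n : ℕ) : ℝ := ∏ i ∈ Finset.range n, (a + i)

/-- `A^{(d)}_z(n) = ∑_{n_1+⋯+n_d=n} C(n;n_1,…,n_d) C(n+|z|; n_1+z_1,…,n_d+z_d)`. -/
def Acoef (d : ℕ) (z : Fin d → ℕ) (n : ℕ) : ℕ :=
  ∑ p ∈ Finset.Nat.antidiagonalTuple d n,
    Nat.multinomial Finset.univ p * Nat.multinomial Finset.univ (fun j => p j + z j)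


/-!
Expanding each `I_{z_j}(2t) = ∑ₙ t^(2n+z_j) / (n! (n+z_j)!)` and multiplying the `d` absolutely
convergent series gives `∏ⱼ I_{z_j}(2t) = ∑_N A(N) t^(2N+h) / (N! (N+h)!)`: grouping the
tuples `(n_1, …, n_d)` by their sum `N` turns `∏ⱼ 1/(n_j! (n_j+z_j)!)` into the two
multinomial coefficients of `A(N)`. Since `A(N) ≤ d^(2N+h)` and
`(2N+h)!/(N! (N+h)!) ≤ 2^(2N+h)`, the termwise Laplace transforms
`A(N) (2N+h)! / (N! (N+h)! x^(2N+h+1))` are dominated by a geometric series of ratio `(2d/x)²`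
once `x > 2d`, which justifies integrating termwise. Finally the duplication formula
`(a)_{2N} = 4^N (a/2)_N ((a+1)/2)_N` at `a = h+1` rewrites `(2N+h)!/(N+h)!` as
`4^N (h/2+1/2)_N (h/2+1)_N / (h+1)_N`.
-/

open Finset
open scoped Nat

theorem poch_succ (a : ℝ) (n : ℕ) : poch a (n + 1) = poch a n * (a + n) :=
  prod_range_succ _ _

theorem poch_pos {a : ℝ} (ha : 0 < a) (n : ℕ) : 0 < poch a n :=
  prod_pos fun i _ => by positivity

theorem factorial_add_eq_mul_poch (h k : ℕ) : ((h + k)! : ℝ) = h ! * poch (h + 1) k := by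
  induction k with
  | zero => simp [poch]
  | succ k ih =>
    rw [← add_assoc, Nat.factorial_succ, Nat.cast_mul, ih, poch_succ]
    push_cast
    ring

theorem poch_two_mul (a : ℝ) (n : ℕ) :
    poch a (2 * n) = 4 ^ n * poch (a / 2) n * poch ((a + 1) / 2) n := by
  induction n with
  | zero => simp [poch]
  | succ n ih =>
    rw [mul_add_one, poch_succ, poch_succ, ih, poch_succ, poch_succ]
    push_cast
    ring

theorem factorial_two_mul_add (h N : ℕ) :
    ((2 * N + h)! : ℝ) =
      (N + h)! * 4 ^ N * (poch (h / 2 + 1 / 2) N * poch (h / 2 + 1) N / poch (h + 1) N) := by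
  have hpoch : poch ((h : ℝ) + 1) N ≠ 0 := (poch_pos (by positivity) N).ne'
  rw [add_comm _ h, add_comm N h, factorial_add_eq_mul_poch, factorial_add_eq_mul_poch,
    poch_two_mul, show ((h : ℝ) + 1) / 2 = h / 2 + 1 / 2 by ring,
    show ((h : ℝ) + 1 + 1) / 2 = h / 2 + 1 by ring]
  field_simp

theorem div_factorial_mul_laplace_eq_poch (h N : ℕ) {x : ℝ} (hx : 0 < x) (A : ℝ) :
    A / (N ! * (N + h)!) * ((2 * N + h)! / x ^ (2 * N + h + 1)) =
      x ^ (-(h + 1 : ℤ)) *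
        (A * (poch (h / 2 + 1 / 2) N * poch (h / 2 + 1) N / poch (h + 1) N) *
          (4 / x ^ 2) ^ N / N !) := by
  have hpoch : poch ((h : ℝ) + 1) N ≠ 0 := (poch_pos (by positivity) N).ne'
  rw [factorial_two_mul_add, show (-(h + 1 : ℤ)) = -((h + 1 : ℕ) : ℤ) by push_cast; ring,
    zpow_neg, zpow_natCast, div_pow, ← pow_mul]
  field_simp
  ring

theorem Nat.sum_multinomial_piAntidiag {ι : Type*} [Fintype ι] [DecidableEq ι] (n : ℕ) :
    ∑ k ∈ piAntidiag (univ : Finset ι) n, multinomial univ k = Fintype.card ι ^ n := by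
  simpa using (Finset.sum_pow_eq_sum_piAntidiag (univ : Finset ι) (fun _ => (1 : ℕ)) n).symm

theorem Nat.multinomial_le_card_pow {ι : Type*} [Fintype ι] (f : ι → ℕ) :
    multinomial univ f ≤ Fintype.card ι ^ ∑ i, f i := by
  classical
  rw [← Nat.sum_multinomial_piAntidiag]
  exact single_le_sum (fun _ _ => Nat.zero_le _)
    (mem_piAntidiag.mpr ⟨rfl, fun i _ => mem_univ i⟩)

theorem Finset.Nat.antidiagonalTuple_eq_piAntidiag (d n : ℕ) :
    antidiagonalTuple d n = piAntidiag univ n := by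
  ext p
  simp [mem_antidiagonalTuple, mem_piAntidiag]

theorem Acoef_le_pow {d : ℕ} (z : Fin d → ℕ) (N : ℕ) :
    Acoef d z N ≤ d ^ (2 * N + ∑ j, z j) :=
  calc Acoef d z N
      ≤ ∑ p ∈ Nat.antidiagonalTuple d N, Nat.multinomial univ p * d ^ (N + ∑ j, z j) := by
        refine sum_le_sum fun p hp => Nat.mul_le_mul_left _ ?_
        simpa [sum_add_distrib, Nat.mem_antidiagonalTuple.mp hp] using
          Nat.multinomial_le_card_pow fun j => p j + z j
    _ = d ^ (2 * N + ∑ j, z j) := by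
        rw [← sum_mul, Nat.antidiagonalTuple_eq_piAntidiag, Nat.sum_multinomial_piAntidiag,
          Fintype.card_fin, ← pow_add]
        ring_nf

theorem Nat.cast_multinomial_div_factorial {ι : Type*} (s : Finset ι) (f : ι → ℕ) :
    (multinomial s f : ℝ) / (∑ i ∈ s, f i)! = ∏ i ∈ s, ((f i)! : ℝ)⁻¹ := by
  rw [← multinomial_spec, Nat.cast_mul, Nat.cast_prod, mul_comm, ← div_div,
    div_self (mod_cast (multinomial_pos s f).ne'), one_div, prod_inv_distrib]

/-- The coefficient of `t ^ (2 * N + ∑ j, z j)` in `∏ j, besselI (z j) (2 * t)`. -/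
noncomputable def besselProdCoeff {d : ℕ} (z : Fin d → ℕ) (N : ℕ) : ℝ :=
  Acoef d z N / (N ! * (N + ∑ j, z j)!)

theorem besselProdCoeff_eq_sum_prod {d : ℕ} (z : Fin d → ℕ) (N : ℕ) :
    besselProdCoeff z N =
      ∑ p ∈ Nat.antidiagonalTuple d N, ∏ j, ((p j)! * (p j + z j)! : ℝ)⁻¹ := by
  rw [besselProdCoeff, Acoef, Nat.cast_sum, sum_div]
  refine sum_congr rfl fun p hp => ?_
  have hN : ∑ j, p j = N := Nat.mem_antidiagonalTuple.mp hp
  have hNz : ∑ j, (p j + z j) = N + ∑ j, z j := by rw [sum_add_distrib, hN]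
  rw [Nat.cast_mul, mul_div_mul_comm, ← hNz, ← hN, Nat.cast_multinomial_div_factorial,
    Nat.cast_multinomial_div_factorial, ← prod_mul_distrib]
  simp_rw [mul_inv]

theorem besselProdCoeff_mul_pow {d : ℕ} (z : Fin d → ℕ) (N : ℕ) (t : ℝ) :
    besselProdCoeff z N * t ^ (2 * N + ∑ j, z j) =
      ∑ p ∈ Nat.antidiagonalTuple d N,
        ∏ j, t ^ (2 * p j + z j) / ((p j)! * (p j + z j)! : ℝ) := by
  rw [besselProdCoeff_eq_sum_prod, sum_mul]
  refine sum_congr rfl fun p hp => ?_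
  have hpow : t ^ (2 * N + ∑ j, z j) = ∏ j, t ^ (2 * p j + z j) := by
    rw [prod_pow_eq_pow_sum, sum_add_distrib, ← mul_sum, Nat.mem_antidiagonalTuple.mp hp]
  rw [hpow, ← prod_mul_distrib]
  exact prod_congr rfl fun j _ => inv_mul_eq_div _ _

theorem besselProdCoeff_mul_factorial {d : ℕ} (z : Fin d → ℕ) (N : ℕ) :
    besselProdCoeff z N * (2 * N + ∑ j, z j)! = Acoef d z N * (2 * N + ∑ j, z j).choose N := by
  have hchoose := Nat.cast_add_choose ℝ (a := N) (b := N + ∑ j, z j)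
  rw [show N + (N + ∑ j, z j) = 2 * N + ∑ j, z j by ring] at hchoose
  rw [besselProdCoeff, hchoose]
  field_simp

theorem summable_besselProdCoeff_mul_factorial_div_pow {d : ℕ} (z : Fin d → ℕ) {x : ℝ}
    (hx : 2 * d < x) :
    Summable fun N =>
      besselProdCoeff z N * ((2 * N + ∑ j, z j)! / x ^ (2 * N + ∑ j, z j + 1)) := by
  set h := ∑ j, z j
  have hx0 : 0 < x := lt_of_le_of_lt (by positivity) hx
  set r := 2 * d / x
  have hr0 : 0 ≤ r := by positivity
  have hr1 : r < 1 := (div_lt_one hx0).mpr hx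
  refine .of_nonneg_of_le (fun N => by unfold besselProdCoeff; positivity) (fun N => ?_)
    ((summable_geometric_of_lt_one (sq_nonneg r) (pow_lt_one₀ hr0 hr1 two_ne_zero)).mul_left
      (r ^ h / x))
  have hcount : (Acoef d z N * (2 * N + h).choose N : ℝ) ≤ (2 * d) ^ (2 * N + h) := by
    rw [mul_pow, mul_comm (2 ^ _ : ℝ)]
    exact_mod_cast Nat.mul_le_mul (Acoef_le_pow z N) (Nat.choose_le_two_pow _ _)
  calc besselProdCoeff z N * ((2 * N + h)! / x ^ (2 * N + h + 1))
      = (Acoef d z N * (2 * N + h).choose N : ℝ) / x ^ (2 * N + h + 1) := by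
        rw [mul_div_assoc', besselProdCoeff_mul_factorial]
    _ ≤ (2 * d) ^ (2 * N + h) / x ^ (2 * N + h + 1) := by gcongr
    _ = r ^ h / x * (r ^ 2) ^ N := by
        rw [← pow_mul, div_mul_eq_mul_div, ← pow_add, div_pow, pow_succ]
        ring_nf

section PiProd

variable {R β : Type*} [NormedCommRing R]

theorem Fin.prod_univ_consEquiv {d : ℕ} (f : Fin (d + 1) → β → R)
    (q : β × (Fin d → β)) :
    ∏ j, f j (Fin.consEquiv (fun _ => β) q j) = f 0 q.1 * ∏ j, f j.succ (q.2 j) := by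
  simp [Fin.consEquiv, Fin.prod_univ_succ]

theorem summable_norm_pi_prod {d : ℕ} {f : Fin d → β → R}
    (hf : ∀ j, Summable fun b => ‖f j b‖) :
    Summable fun p : Fin d → β => ‖∏ j, f j (p j)‖ := by
  induction d with
  | zero => exact .of_finite
  | succ d ih =>
    rw [← (Fin.consEquiv fun _ => β).summable_iff]
    simpa only [Function.comp_def, Fin.prod_univ_consEquiv] using
      (hf 0).mul_norm (ih fun j => hf j.succ)

theorem hasSum_pi_prod [CompleteSpace R] {d : ℕ} {f : Fin d → β → R}
    (hf : ∀ j, Summable fun b => ‖f j b‖) :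
    HasSum (fun p : Fin d → β => ∏ j, f j (p j)) (∏ j, ∑' b, f j b) := by
  induction d with
  | zero => simp
  | succ d ih =>
    have hhead : HasSum (f 0) (∑' b, f 0 b) := (hf 0).of_norm.hasSum
    have htail : HasSum (fun p : Fin d → β => ∏ j, f j.succ (p j))
        (∏ j : Fin d, ∑' b, f j.succ b) := ih fun j => hf j.succ
    have htail_norm : Summable fun p : Fin d → β => ‖∏ j, f j.succ (p j)‖ :=
      summable_norm_pi_prod fun j => hf j.succ
    have hsummable := summable_mul_of_summable_norm (hf 0) htail_norm
    have hmul := hhead.mul htail hsummable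
    rw [← (Fin.consEquiv fun _ => β).hasSum_iff, Fin.prod_univ_succ]
    exact hmul.congr_fun fun q => Fin.prod_univ_consEquiv f q

end PiProd

theorem HasSum.sum_antidiagonalTuple {α : Type*} [AddCommMonoid α] [TopologicalSpace α]
    [ContinuousAdd α] [RegularSpace α] {d : ℕ} {f : (Fin d → ℕ) → α} {a : α}
    (hf : HasSum f a) :
    HasSum (fun n => ∑ p ∈ Nat.antidiagonalTuple d n, f p) a :=
  ((Nat.sigmaAntidiagonalTupleEquivTuple d).hasSum_iff.mpr hf).sigma fun n =>
    Finset.hasSum (Nat.antidiagonalTuple d n) f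

theorem summable_norm_besselI_term (z : ℕ) (t : ℝ) :
    Summable fun n : ℕ => ‖t ^ (2 * n + z) / (n ! * (n + z)! : ℝ)‖ := by
  refine .of_nonneg_of_le (fun n => norm_nonneg _) (fun n => ?_)
    ((Real.summable_pow_div_factorial (t ^ 2)).mul_left (|t| ^ z))
  rw [norm_div, norm_pow, Real.norm_eq_abs, Real.norm_of_nonneg (by positivity), pow_add, pow_mul,
    sq_abs, mul_comm, mul_div_assoc]
  gcongr _ * (_ / ?_)
  exact le_mul_of_one_le_right (by positivity) (mod_cast (n + z).factorial_pos)

theorem hasSum_besselI_two_mul (z : ℕ) (t : ℝ) :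
    HasSum (fun n : ℕ => t ^ (2 * n + z) / (n ! * (n + z)! : ℝ)) (besselI z (2 * t)) := by
  rw [besselI, mul_div_cancel_left₀ t two_ne_zero]
  exact (summable_norm_besselI_term z t).of_norm.hasSum

theorem hasSum_prod_besselI_two_mul {d : ℕ} (z : Fin d → ℕ) (t : ℝ) :
    HasSum (fun N => besselProdCoeff z N * t ^ (2 * N + ∑ j, z j))
      (∏ j, besselI (z j) (2 * t)) := by
  have hprod := hasSum_pi_prod fun j => summable_norm_besselI_term (z j) t
  rw [← prod_congr rfl fun j _ => (hasSum_besselI_two_mul (z j) t).tsum_eq]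
  exact hprod.sum_antidiagonalTuple.congr_fun fun N => besselProdCoeff_mul_pow z N t

theorem integrableOn_exp_neg_mul_pow {x : ℝ} (hx : 0 < x) (k : ℕ) :
    IntegrableOn (fun t => Real.exp (-x * t) * t ^ k) (Set.Ioi 0) := by
  have hk : (-1 : ℝ) < k := by linarith [k.cast_nonneg (α := ℝ)]
  refine (integrableOn_rpow_mul_exp_neg_mul_rpow hk one_pos hx).congr_fun (fun t _ => ?_)
    measurableSet_Ioi
  simp only [Real.rpow_one, Real.rpow_natCast, mul_comm]

theorem integral_exp_neg_mul_pow {x : ℝ} (hx : 0 < x) (k : ℕ) :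
    ∫ t in Set.Ioi 0, Real.exp (-x * t) * t ^ k = k ! / x ^ (k + 1) := by
  have hGamma := Real.integral_rpow_mul_exp_neg_mul_Ioi (a := k + 1) (by positivity) hx
  rw [add_sub_cancel_right, Real.Gamma_nat_eq_factorial, one_div, Real.inv_rpow hx.le,
    ← Nat.cast_succ, Real.rpow_natCast] at hGamma
  rw [div_eq_inv_mul, ← hGamma]
  refine setIntegral_congr_fun measurableSet_Ioi fun t _ => ?_
  rw [Real.rpow_natCast, mul_comm, neg_mul]

theorem hasSum_integral_exp_mul_prod_besselI {d : ℕ} (z : Fin d → ℕ) {x : ℝ}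
    (hx : 2 * d < x) :
    HasSum (fun N => besselProdCoeff z N * ((2 * N + ∑ j, z j)! / x ^ (2 * N + ∑ j, z j + 1)))
      (∫ t in Set.Ioi 0, Real.exp (-x * t) * ∏ j, besselI (z j) (2 * t)) := by
  have hx0 : 0 < x := lt_of_le_of_lt (by positivity) hx
  set F : ℕ → ℝ → ℝ := fun N t =>
    Real.exp (-x * t) * (besselProdCoeff z N * t ^ (2 * N + ∑ j, z j))
  have hF_eq : ∀ N t,
      F N t = besselProdCoeff z N * (Real.exp (-x * t) * t ^ (2 * N + ∑ j, z j)) :=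
    fun N t => mul_left_comm _ _ _
  have hF_int : ∀ N, IntegrableOn (F N) (Set.Ioi 0) := fun N =>
    IntegrableOn.congr_fun ((integrableOn_exp_neg_mul_pow hx0 _).const_mul _)
      (fun t _ => (hF_eq N t).symm) measurableSet_Ioi
  have hF_integral : ∀ N, ∫ t in Set.Ioi 0, F N t =
      besselProdCoeff z N * ((2 * N + ∑ j, z j)! / x ^ (2 * N + ∑ j, z j + 1)) := fun N => by
    simp only [hF_eq, integral_const_mul, integral_exp_neg_mul_pow hx0]
  have hF_norm : ∀ N, ∫ t in Set.Ioi 0, ‖F N t‖ = ∫ t in Set.Ioi 0, F N t := fun N =>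
    setIntegral_congr_fun measurableSet_Ioi fun t (ht : 0 < t) =>
      Real.norm_of_nonneg (by unfold F besselProdCoeff; positivity)
  have hF_tsum : ∀ t, ∑' N, F N t = Real.exp (-x * t) * ∏ j, besselI (z j) (2 * t) := fun t =>
    ((hasSum_prod_besselI_two_mul z t).mul_left _).tsum_eq
  have hsum := hasSum_integral_of_summable_integral_norm hF_int
    (by simpa only [hF_norm, hF_integral]
      using summable_besselProdCoeff_mul_factorial_div_pow z hx)
  simpa only [hF_integral, hF_tsum] using hsum

/-- Laplace transform of a product of Bessel functions: for `z ∈ (ℤ≥0)^d`,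
`h = z_1+⋯+z_d` and real `x > 2d`,
`∫_0^∞ e^{-xt} ∏_j I_{z_j}(2t) dt
  = x^{-(h+1)} ∑_{n≥0} A(n) ((h/2+1/2)_n (h/2+1)_n/(h+1)_n) (4/x²)^n/n!`. -/
theorem laplace_prod_besselI (d : ℕ) (z : Fin d → ℕ) (h : ℕ) (hh : h = ∑ j, z j)
    (x : ℝ) (hx : 2 * d < x) :
    ∫ t in Set.Ioi (0 : ℝ), Real.exp (-x * t) * ∏ j, besselI (z j) (2 * t) =
      x ^ (-(h + 1 : ℤ)) *
        ∑' n : ℕ, (Acoef d z n : ℝ) *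
          (poch ((h : ℝ) / 2 + 1 / 2) n * poch ((h : ℝ) / 2 + 1) n / poch ((h : ℝ) + 1) n) *
          (4 / x ^ 2) ^ n / n.factorial := by
  subst hh
  have hx0 : 0 < x := lt_of_le_of_lt (by positivity) hx
  rw [← (hasSum_integral_exp_mul_prod_besselI z hx).tsum_eq, ← tsum_mul_left]
  exact tsum_congr fun N => div_factorial_mul_laplace_eq_poch _ N hx0 _
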